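/- An atom a in an integral domain D is prime if and only if the principal ideal (a) is a maximal t-ideal of D. -/
import Mathlib


/-- Membership in the divisorial closure `A_v` of an ideal `A` of a domain `D`:
`A_v` is the intersection of all nonzero principal fractional ideals `(d/c)D`
containing `A`.  Here `x ∈ (d/c)D` is expressed as `d ∣ c * x`. -/
def VMem {D : Type*} [CommRing D] (A : Ideal D) (x : D) : Prop :=
  ∀ c d : D, c ≠ 0 → d ≠ 0 → (∀ a ∈ A, d ∣ c * a) → d ∣ c * x

/-- Membership in `A_t`: the union of `H_v` over nonzero finitely generated
subideals `H` of `A`. -/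
def TMem {D : Type*} [CommRing D] (A : Ideal D) (x : D) : Prop :=
  ∃ H : Ideal D, H ≠ ⊥ ∧ H.FG ∧ H ≤ A ∧ VMem H x

/-- An ideal `A` is a `t`-ideal if `A_t = A` (equivalently `A_t ⊆ A`). -/
def IsTIdeal {D : Type*} [CommRing D] (A : Ideal D) : Prop :=
  ∀ x : D, TMem A x → x ∈ A

/-- A maximal `t`-ideal: a proper `t`-ideal maximal among proper integral `t`-ideals. -/
def IsMaxTIdeal {D : Type*} [CommRing D] (A : Ideal D) : Prop :=
  A ≠ ⊤ ∧ IsTIdeal A ∧ ∀ B : Ideal D, IsTIdeal B → B ≠ ⊤ → A ≤ B → A = B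

/-- The `v`-closure of `H` as an ideal. -/
def vIdeal {D : Type*} [CommRing D] (H : Ideal D) : Ideal D where
  carrier := {z | VMem H z}
  zero_mem' := by
    intro c d _ _ _
    simp
  add_mem' := by
    intro x y hx hy c d hc hd hall
    have := dvd_add (hx c d hc hd hall) (hy c d hc hd hall)
    simpa [mul_add] using this
  smul_mem' := by
    intro r x hx c d hc hd hall
    have := (hx c d hc hd hall).mul_left r
    simpa [smul_eq_mul, mul_left_comm, mul_assoc] using this

lemma mem_vIdeal {D : Type*} [CommRing D] {H : Ideal D} {z : D} :
    z ∈ vIdeal H ↔ VMem H z := Iff.rfl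

lemma le_vIdeal {D : Type*} [CommRing D] (H : Ideal D) : H ≤ vIdeal H := by
  intro h hh c d _ _ hall
  exact hall h hh

lemma isTIdeal_vIdeal {D : Type*} [CommRing D] (H : Ideal D) : IsTIdeal (vIdeal H) := by
  rintro z ⟨H', _, _, hH'le, hv⟩ c d hc hd hall
  exact hv c d hc hd (fun h' hh' => hH'le hh' c d hc hd hall)

theorem stmt5 (D : Type*) [CommRing D] [IsDomain D] (a : D) (ha : Irreducible a) :
    Prime a ↔ IsMaxTIdeal (Ideal.span ({a} : Set D)) := by
  have ha0 : a ≠ 0 := ha.ne_zero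
  -- principal ideals are t-ideals
  have hT : IsTIdeal (Ideal.span ({a} : Set D)) := by
    rintro x ⟨H, _, _, hle, hv⟩
    rw [Ideal.mem_span_singleton]
    have := hv 1 a one_ne_zero ha0 (fun h hh => by
      have : a ∣ h := Ideal.mem_span_singleton.mp (hle hh)
      simpa using this)
    simpa using this
  constructor
  · intro hp
    refine ⟨?_, hT, ?_⟩
    · simpa [Ideal.span_singleton_eq_top] using ha.not_isUnit
    · intro B hB hBne hle
      refine le_antisymm hle (fun x hxB => ?_)
      rw [Ideal.mem_span_singleton]
      by_contra hax
      -- H = (a, x), show VMem H 1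
      have hv1 : VMem (Ideal.span ({a, x} : Set D)) 1 := by
        intro c d hc hd hall
        obtain ⟨e, he⟩ := hall a (Ideal.subset_span (by simp))
        obtain ⟨f, hf⟩ := hall x (Ideal.subset_span (by simp))
        have key : d * (e * x) = d * (f * a) := by
          calc d * (e * x) = (c * a) * x := by rw [he]; ring
          _ = (c * x) * a := by ring
          _ = d * (f * a) := by rw [hf]; ring
        have hex : e * x = f * a := mul_left_cancel₀ hd key
        have : a ∣ e * x := ⟨f, by rw [hex]; ring⟩
        rcases hp.2.2 e x this with hae | hax'
        · obtain ⟨g, hg⟩ := hae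
          refine ⟨g, mul_left_cancel₀ ha0 ?_⟩
          calc a * (c * 1) = c * a := by ring
          _ = d * (a * g) := by rw [he, hg]
          _ = a * (d * g) := by ring
        · exact absurd hax' hax
      have h1B : (1 : D) ∈ B := by
        refine hB 1 ⟨Ideal.span ({a, x} : Set D), ?_, ?_, ?_, hv1⟩
        · intro h
          have : a ∈ (⊥ : Ideal D) := h ▸ Ideal.subset_span (by simp)
          exact ha0 (by simpa using this)
        · exact Submodule.fg_span (Set.toFinite _)
        · rw [Ideal.span_le]
          rintro y (rfl | rfl)
          · exact hle (Ideal.subset_span rfl)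
          · exact hxB
      exact hBne ((Ideal.eq_top_iff_one B).mpr h1B)
  · rintro ⟨_, _, hmax⟩
    refine ⟨ha0, ha.not_isUnit, fun x y hdvd => ?_⟩
    by_cases hax : a ∣ x
    · exact Or.inl hax
    right
    by_cases hy : y = 0
    · simp [hy]
    -- VMem (a,x) 1 from maximality
    have hv1 : VMem (Ideal.span ({a, x} : Set D)) 1 := by
      by_contra hv
      set B := vIdeal (Ideal.span ({a, x} : Set D)) with hBdef
      have hBne : B ≠ ⊤ := by
        intro h
        exact hv ((Ideal.eq_top_iff_one B).mp h)
      have hleB : Ideal.span ({a} : Set D) ≤ B := by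
        rw [Ideal.span_le]
        rintro z rfl
        exact le_vIdeal _ (Ideal.subset_span (by simp))
      have heq := hmax B (isTIdeal_vIdeal _) hBne hleB
      have hxB : x ∈ B := le_vIdeal _ (Ideal.subset_span (by simp))
      rw [← heq, Ideal.mem_span_singleton] at hxB
      exact hax hxB
    have := hv1 y a hy ha0 (fun h hh => ?_)
    · simpa using this
    · obtain ⟨u, v, huv⟩ := Ideal.mem_span_pair.mp hh
      obtain ⟨w, hw⟩ := hdvd
      refine ⟨y * u + v * w, ?_⟩
      calc y * h = a * (y * u) + v * (x * y) := by rw [← huv]; ring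
      _ = a * (y * u) + v * (a * w) := by rw [hw]
      _ = a * (y * u + v * w) := by ring
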